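/- Let K be an algebraically closed field equipped with a nontrivial non-archimedean absolute value |·|, and let a be a coefficient tuple over K. For every subset Z ⊆ ℙ^N(K): (1) the limit G(Z) := lim_{n→∞} d^{−n}·λ(f_a^n(Z)) exists in [0,∞]; (2) G(f_a(Z)) = d·G(Z); (3) if λ(Z) > B(f_a), then G(Z) = λ(Z); (4) if λ(Z) < ∞, then G(Z) is finite and |G(Z) − λ(Z)| ≤ 2·B(f_a); and (5) if the sets f_a^n(Z), n ≥ 0, take only finitely many distinct values and λ(f_a^n(Z)) < ∞ for all n, then G(Z) = 0. -/

import Mathlib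

open MvPolynomial Filter Topology
open scoped ENNReal

noncomputable section

/-- Multi-indices `I = (I_0, …, I_N)` of nonnegative integers with `|I| = d` and
`0 < I_N < d` (the set `Ind*(N,d)`). -/
abbrev MIdx (N d : ℕ) : Type :=
  {I : Fin (N + 1) → Fin (d + 1) //
    (∑ j, (I j : ℕ)) = d ∧ 0 < (I (Fin.last N) : ℕ) ∧ (I (Fin.last N) : ℕ) < d}

/-- A coefficient tuple `a = (a_{i,I})` for `0 ≤ i < N` and `I ∈ Ind*(N,d)`. -/
abbrev Coeffs (N d : ℕ) (K : Type*) : Type _ := Fin N → MIdx N d → K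

variable {K : Type*} [Field K]

/-- The homogeneous coordinate forms of the monic polynomial endomorphism `f_a`:
`f_i = x_i^d + ∑_{I} a_{i,I} x^I` for `i < N`, and `f_N = x_N^d`. -/
def fPoly (N d : ℕ) (a : Coeffs N d K) (i : Fin (N + 1)) : MvPolynomial (Fin (N + 1)) K :=
  if h : (i : ℕ) < N then
    X i ^ d + ∑ I : MIdx N d, C (a ⟨(i : ℕ), h⟩ I) * ∏ t, X t ^ (I.1 t : ℕ)
  else X i ^ d

/-- `f_a` on homogeneous coordinate vectors. -/
def Fvec (N d : ℕ) (a : Coeffs N d K) (x : Fin (N + 1) → K) : Fin (N + 1) → K :=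
  fun i => eval x (fPoly N d a i)

/-- The Jacobian form `J_{f_a} = det(∂f_i/∂x_j)_{0 ≤ i,j ≤ N-1}`. -/
def Jpoly (N d : ℕ) (a : Coeffs N d K) : MvPolynomial (Fin (N + 1)) K :=
  (Matrix.of fun i j : Fin N =>
    pderiv (Fin.castSucc j) (fPoly N d a (Fin.castSucc i))).det

/-- The critical locus `C_{f_a} ⊆ ℙ^N(K)`. -/
def critLocus (N d : ℕ) (a : Coeffs N d K) : Set (Projectivization K (Fin (N + 1) → K)) :=
  {P | ∃ (x : Fin (N + 1) → K) (hx : x ≠ 0),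
        eval x (Jpoly N d a) = 0 ∧ P = Projectivization.mk K x hx}

/-- Image of a subset of `ℙ^N(K)` under the projective map induced by a
homogeneous polynomial map `F` on coordinates. -/
def imSet {K : Type*} [Field K] (N : ℕ) (F : (Fin (N + 1) → K) → (Fin (N + 1) → K))
    (S : Set (Projectivization K (Fin (N + 1) → K))) :
    Set (Projectivization K (Fin (N + 1) → K)) :=
  {Q | ∃ (x : Fin (N + 1) → K) (hx : x ≠ 0) (hFx : F x ≠ 0),
        Projectivization.mk K x hx ∈ S ∧ Q = Projectivization.mk K (F x) hFx}

/-- `f_a^n(C_{f_a})`, the image of the critical locus under the `n`-th iterate. -/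
def critImage (N d : ℕ) (a : Coeffs N d K) (n : ℕ) :
    Set (Projectivization K (Fin (N + 1) → K)) :=
  (imSet N (Fvec N d a))^[n] (critLocus N d a)

/-- `f_a` is post-critically finite: the sets `f_a^n(C_{f_a})` take only finitely
many distinct values. -/
def IsPCF (N d : ℕ) (a : Coeffs N d K) : Prop :=
  (Set.range fun n => critImage N d a n).Finite

/-- `λ(Z) = log⁺ sup {|β_N|⁻¹ : |β_0| = ⋯ = |β_{N-1}| = 1, β_N ≠ 0, [β] ∈ Z} ∈ [0,∞]`,
with `sup ∅ = 0`. -/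
def lam (N : ℕ) (v : AbsoluteValue K ℝ)
    (Z : Set (Projectivization K (Fin (N + 1) → K))) : ℝ≥0∞ :=
  ⨆ (β : Fin (N + 1) → K) (hβ : β ≠ 0)
    (_ : ∀ j : Fin N, v (β (Fin.castSucc j)) = 1)
    (_ : β (Fin.last N) ≠ 0)
    (_ : Projectivization.mk K β hβ ∈ Z),
    ENNReal.ofReal (Real.log ((v (β (Fin.last N)))⁻¹))

/-- `B(f_a) = log⁺ max_{i,I} |a_{i,I}|^{1/I_N}`. -/
def Bnorm (N d : ℕ) (v : AbsoluteValue K ℝ) (a : Coeffs N d K) : ℝ :=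
  max 0 (⨆ (i : Fin N) (I : MIdx N d),
    Real.log (v (a i I) ^ ((((I.1 (Fin.last N) : ℕ)) : ℝ))⁻¹))

end

/-!
For a point `y` with `y_N ≠ 0` put `ρ = e^B |y_N|`. Every non-leading monomial of `f_i`
has `0 < I_N < d`, so its size is at most `ρ · max(ρ, max_{j<N} |y_j|)^{d-1}`. When
`ρ < max_{j<N} |y_j|` the ultrametric inequality makes the leading terms `y_j^d` dominate,
hence `λ(f(Z)) ≤ d · max(λ(Z), B)` and `d · λ(Z) ≤ max(λ(f(Z)), d · B)`. Above `B` the height is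
thus multiplied by exactly `d` at each step, while from below `B` it stays `≤ d^n B` after `n`
steps. So `d^{-n} λ(f^n(Z))` is eventually constant once `λ(f^n(Z))` exceeds `B`, and tends
to `0` if it never does; every property of `G` follows from this dichotomy.
-/

open Real

section Coordinates

variable {N d : ℕ} {K : Type*} [Field K] (a : Coeffs N d K)

lemma MIdx.sum_castSucc (I : MIdx N d) :
    ∑ j : Fin N, (I.1 j.castSucc : ℕ) = d - I.1 (Fin.last N) := by
  have := I.2.1
  rw [Fin.sum_univ_castSucc] at this
  omega

lemma Fvec_castSucc (x : Fin (N + 1) → K) (j : Fin N) :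
    Fvec N d a x j.castSucc =
      x j.castSucc ^ d + ∑ I : MIdx N d, a j I * ∏ t, x t ^ (I.1 t : ℕ) := by
  simp [Fvec, fPoly]

lemma Fvec_last (x : Fin (N + 1) → K) : Fvec N d a x (Fin.last N) = x (Fin.last N) ^ d := by
  simp [Fvec, fPoly]

lemma Fvec_smul (u : K) (x : Fin (N + 1) → K) : Fvec N d a (u • x) = u ^ d • Fvec N d a x := by
  ext i
  induction i using Fin.lastCases with
  | last => simp [Fvec_last, mul_pow]
  | cast j =>
    have hmon (I : MIdx N d) : ∏ t, (u • x) t ^ (I.1 t : ℕ) = u ^ d * ∏ t, x t ^ (I.1 t : ℕ) := by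
      simp only [Pi.smul_apply, smul_eq_mul, mul_pow, Finset.prod_mul_distrib,
        Finset.prod_pow_eq_pow_sum, I.2.1]
    rw [Pi.smul_apply, Fvec_castSucc, Fvec_castSucc]
    simp only [hmon]
    simp only [Pi.smul_apply, smul_eq_mul, mul_pow, mul_add, Finset.mul_sum]
    congr 1
    exact Finset.sum_congr rfl fun I _ => by ring

end Coordinates

lemma exists_eq_of_mk_mem_imSet {N d : ℕ} {K : Type*} [Field K] [IsAlgClosed K] (hd : d ≠ 0)
    {F : (Fin (N + 1) → K) → Fin (N + 1) → K} (hF : ∀ (u : K) x, F (u • x) = u ^ d • F x)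
    {Z : Set (Projectivization K (Fin (N + 1) → K))} {γ : Fin (N + 1) → K} (hγ : γ ≠ 0)
    (h : Projectivization.mk K γ hγ ∈ imSet N F Z) :
    ∃ (y : Fin (N + 1) → K) (hy : y ≠ 0), Projectivization.mk K y hy ∈ Z ∧ F y = γ := by
  obtain ⟨x, hx, hFx, hxZ, hγx⟩ := h
  obtain ⟨c, rfl⟩ := (Projectivization.mk_eq_mk_iff _ _ _ _ _).mp hγx
  obtain ⟨u, hu⟩ := IsAlgClosed.exists_pow_nat_eq (c : K) (Nat.pos_of_ne_zero hd)
  have hu0 : u ≠ 0 := by rintro rfl; exact c.ne_zero (by rw [← hu, zero_pow hd])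
  refine ⟨u • x, smul_ne_zero hu0 hx, ?_, by rw [hF, hu, Units.smul_def]⟩
  rwa [Projectivization.mk_eq_mk_iff' K _ _ (smul_ne_zero hu0 hx) hx |>.mpr ⟨u, rfl⟩]

lemma exp_mul_lt_one_iff {B r : ℝ} (hr : 0 < r) : exp B * r < 1 ↔ B < log r⁻¹ := by
  rw [log_inv, lt_neg_iff_add_neg, ← exp_lt_one_iff, exp_add, exp_log hr]

section Estimates

variable {N d : ℕ} {K : Type*} [Field K] {v : AbsoluteValue K ℝ} (a : Coeffs N d K)

lemma Bnorm_nonneg : 0 ≤ Bnorm N d v a := le_max_left _ _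

lemma v_coeff_le (i : Fin N) (I : MIdx N d) :
    v (a i I) ≤ exp (Bnorm N d v a) ^ (I.1 (Fin.last N) : ℕ) := by
  set k := (I.1 (Fin.last N) : ℕ)
  rcases (v.nonneg (a i I)).eq_or_lt with h0 | hpos
  · rw [← h0]; positivity
  have hle : log (v (a i I) ^ (k : ℝ)⁻¹) ≤ Bnorm N d v a :=
    le_max_of_le_right <| Finite.le_ciSup_of_le i <| Finite.le_ciSup_of_le I le_rfl
  rw [log_rpow hpos, inv_mul_le_iff₀ (by exact_mod_cast I.2.2.1)] at hle
  rw [← exp_nat_mul, ← exp_log hpos]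
  exact exp_le_exp.mpr hle

lemma v_term_le {M : ℝ} {y : Fin (N + 1) → K} (hyM : ∀ j : Fin N, v (y j.castSucc) ≤ M)
    (i : Fin N) (I : MIdx N d) :
    v (a i I * ∏ t, y t ^ (I.1 t : ℕ)) ≤
      (exp (Bnorm N d v a) * v (y (Fin.last N))) ^ (I.1 (Fin.last N) : ℕ) *
        M ^ (d - I.1 (Fin.last N)) := by
  have hprod : ∏ j : Fin N, v (y j.castSucc) ^ (I.1 j.castSucc : ℕ) ≤ M ^ (d - I.1 (Fin.last N)) :=
    calc ∏ j : Fin N, v (y j.castSucc) ^ (I.1 j.castSucc : ℕ)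
        ≤ ∏ j : Fin N, M ^ (I.1 j.castSucc : ℕ) :=
          Finset.prod_le_prod (fun j _ => by positivity)
            fun j _ => pow_le_pow_left₀ (v.nonneg _) (hyM j) _
      _ = M ^ (d - I.1 (Fin.last N)) := by
          rw [Finset.prod_pow_eq_pow_sum, MIdx.sum_castSucc]
  rw [map_mul, map_prod, Fin.prod_univ_castSucc]
  simp only [map_pow]
  calc v (a i I) * ((∏ j : Fin N, v (y j.castSucc) ^ (I.1 j.castSucc : ℕ)) *
        v (y (Fin.last N)) ^ (I.1 (Fin.last N) : ℕ))
      ≤ exp (Bnorm N d v a) ^ (I.1 (Fin.last N) : ℕ) *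
          (M ^ (d - I.1 (Fin.last N)) * v (y (Fin.last N)) ^ (I.1 (Fin.last N) : ℕ)) := by
        gcongr ?_ * (?_ * _)
        exact v_coeff_le a i I
    _ = _ := by ring

lemma pow_mul_pow_sub_le_mul_max_pow {ρ M : ℝ} (hρ : 0 ≤ ρ) (hM : 0 ≤ M) {k d : ℕ}
    (hk : 1 ≤ k) (hkd : k ≤ d) : ρ ^ k * M ^ (d - k) ≤ ρ * max ρ M ^ (d - 1) :=
  calc ρ ^ k * M ^ (d - k) = ρ * (ρ ^ (k - 1) * M ^ (d - k)) := by
        rw [← mul_assoc, ← pow_succ', Nat.sub_add_cancel hk]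
    _ ≤ ρ * (max ρ M ^ (k - 1) * max ρ M ^ (d - k)) := by
        gcongr
        exacts [le_max_left _ _, le_max_right _ _]
    _ = ρ * max ρ M ^ (d - 1) := by rw [← pow_add]; congr 2; omega

end Estimates

section Dominance

variable {N d : ℕ} {K : Type*} [Field K] {v : AbsoluteValue K ℝ} (a : Coeffs N d K)
  {y : Fin (N + 1) → K} {M : ℝ}

lemma v_Fvec_castSucc_sub_pow_le (hna : IsNonarchimedean (v : K → ℝ)) (hM : 0 ≤ M)
    (hyM : ∀ j : Fin N, v (y j.castSucc) ≤ M) (j : Fin N) :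
    v (Fvec N d a y j.castSucc - y j.castSucc ^ d) ≤
      exp (Bnorm N d v a) * v (y (Fin.last N)) *
        max (exp (Bnorm N d v a) * v (y (Fin.last N))) M ^ (d - 1) := by
  rw [Fvec_castSucc, add_sub_cancel_left]
  refine hna.apply_sum_le.trans (Real.iSup_le (fun I => ?_) (by positivity))
  exact (v_term_le a hyM j I).trans
    (pow_mul_pow_sub_le_mul_max_pow (by positivity) hM I.1.2.2.1 I.1.2.2.2.le)

lemma v_Fvec_castSucc_sub_pow_lt (hna : IsNonarchimedean (v : K → ℝ)) (hd : d ≠ 0)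
    (hyM : ∀ j : Fin N, v (y j.castSucc) ≤ M)
    (hρ : exp (Bnorm N d v a) * v (y (Fin.last N)) < M) (j : Fin N) :
    v (Fvec N d a y j.castSucc - y j.castSucc ^ d) < M ^ d := by
  have hM : 0 < M := (by positivity : (0 : ℝ) ≤ _).trans_lt hρ
  calc _ ≤ _ := v_Fvec_castSucc_sub_pow_le a hna hM.le hyM j
    _ = exp (Bnorm N d v a) * v (y (Fin.last N)) * M ^ (d - 1) := by rw [max_eq_right hρ.le]
    _ < M * M ^ (d - 1) := by gcongr
    _ = M ^ d := by rw [← pow_succ', Nat.sub_add_cancel (Nat.one_le_iff_ne_zero.mpr hd)]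

lemma v_Fvec_castSucc_eq_of_lt (hna : IsNonarchimedean (v : K → ℝ)) (hd : d ≠ 0)
    (hyM : ∀ j : Fin N, v (y j.castSucc) ≤ M)
    (hρ : exp (Bnorm N d v a) * v (y (Fin.last N)) < M) {j : Fin N}
    (hj : v (y j.castSucc) = M) : v (Fvec N d a y j.castSucc) = M ^ d := by
  have herr := v_Fvec_castSucc_sub_pow_lt a hna hd hyM hρ j
  rw [← hj, ← map_pow] at herr ⊢
  rw [← add_sub_cancel (y j.castSucc ^ d) (Fvec N d a y j.castSucc)]
  exact hna.add_eq_left_of_lt herr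

lemma v_Fvec_castSucc_lt_of_lt (hna : IsNonarchimedean (v : K → ℝ)) (hd : d ≠ 0)
    (hyM : ∀ j : Fin N, v (y j.castSucc) ≤ M)
    (hρ : exp (Bnorm N d v a) * v (y (Fin.last N)) < M) {j : Fin N}
    (hj : v (y j.castSucc) < M) : v (Fvec N d a y j.castSucc) < M ^ d := by
  rw [← add_sub_cancel (y j.castSucc ^ d) (Fvec N d a y j.castSucc)]
  refine (hna _ _).trans_lt (max_lt ?_ (v_Fvec_castSucc_sub_pow_lt a hna hd hyM hρ j))
  rw [map_pow]
  exact pow_lt_pow_left₀ hj (v.nonneg _) hd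

lemma v_Fvec_castSucc_le_of_le (hna : IsNonarchimedean (v : K → ℝ)) (hd : d ≠ 0) (hM : 0 ≤ M)
    (hyM : ∀ j : Fin N, v (y j.castSucc) ≤ M)
    (hρ : M ≤ exp (Bnorm N d v a) * v (y (Fin.last N))) (j : Fin N) :
    v (Fvec N d a y j.castSucc) ≤ (exp (Bnorm N d v a) * v (y (Fin.last N))) ^ d := by
  rw [← add_sub_cancel (y j.castSucc ^ d) (Fvec N d a y j.castSucc)]
  refine (hna _ _).trans (max_le ?_ ?_)
  · rw [map_pow]
    exact pow_le_pow_left₀ (v.nonneg _) ((hyM j).trans hρ) d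
  · refine (v_Fvec_castSucc_sub_pow_le a hna hM hyM j).trans_eq ?_
    rw [max_eq_left hρ, ← pow_succ', Nat.sub_add_cancel (Nat.one_le_iff_ne_zero.mpr hd)]

lemma normalized_or_log_inv_le_Bnorm (hN : 1 ≤ N) (hd : d ≠ 0)
    (hna : IsNonarchimedean (v : K → ℝ)) (hyN : y (Fin.last N) ≠ 0)
    (h : ∀ j : Fin N, v (Fvec N d a y j.castSucc) = 1) :
    (∀ j : Fin N, v (y j.castSucc) = 1) ∨ log (v (y (Fin.last N)))⁻¹ ≤ Bnorm N d v a := by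
  have : Nonempty (Fin N) := ⟨⟨0, hN⟩⟩
  obtain ⟨j₀, hj₀⟩ := Finite.exists_max fun j : Fin N => v (y j.castSucc)
  rcases lt_or_ge (exp (Bnorm N d v a) * v (y (Fin.last N))) (v (y j₀.castSucc)) with hρ | hρ
  · have hM : v (y j₀.castSucc) = 1 := by
      have := v_Fvec_castSucc_eq_of_lt a hna hd hj₀ hρ rfl
      rwa [h j₀, eq_comm, pow_eq_one_iff_of_nonneg (v.nonneg _) hd] at this
    refine .inl fun j => ((hj₀ j).antisymm (not_lt.mp fun hj => ?_)).trans hM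
    have := v_Fvec_castSucc_lt_of_lt a hna hd hj₀ hρ hj
    rw [h j, hM, one_pow] at this
    exact this.false
  · have := v_Fvec_castSucc_le_of_le a hna hd (v.nonneg _) hj₀ hρ j₀
    rw [h j₀, one_le_pow_iff_of_nonneg (by positivity) hd] at this
    exact .inr (not_lt.mp fun hB => ((exp_mul_lt_one_iff (v.pos hyN)).mpr hB).not_ge this)

lemma v_Fvec_castSucc_eq_one (hd : d ≠ 0) (hna : IsNonarchimedean (v : K → ℝ))
    (hy : ∀ j : Fin N, v (y j.castSucc) = 1) (hyN : y (Fin.last N) ≠ 0)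
    (hB : Bnorm N d v a < log (v (y (Fin.last N)))⁻¹) (j : Fin N) :
    v (Fvec N d a y j.castSucc) = 1 := by
  simpa using v_Fvec_castSucc_eq_of_lt a hna hd (fun j => (hy j).le)
    ((exp_mul_lt_one_iff (v.pos hyN)).mpr hB) (hy j)

end Dominance

lemma ofReal_log_inv_pow (r : ℝ) (d : ℕ) :
    ENNReal.ofReal (log (r ^ d)⁻¹) = d * ENNReal.ofReal (log r⁻¹) := by
  rw [← inv_pow, log_pow, ENNReal.ofReal_mul (Nat.cast_nonneg _), ENNReal.ofReal_natCast]

lemma ENNReal.tendsto_div_pow_of_le {u : ℕ → ℝ≥0∞} {C b : ℝ≥0∞} (hC : C ≠ ⊤) (hb : 1 < b)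
    (hu : ∀ n, u n ≤ C) : Tendsto (fun n => u n / b ^ n) atTop (𝓝 0) := by
  have hlim : Tendsto (fun n => C * b⁻¹ ^ n) atTop (𝓝 0) := by
    simpa using ENNReal.Tendsto.const_mul
      (ENNReal.tendsto_pow_atTop_nhds_zero_of_lt_one (ENNReal.inv_lt_one.mpr hb)) (.inr hC)
  refine tendsto_of_tendsto_of_tendsto_of_le_of_le tendsto_const_nhds hlim (fun _ => bot_le)
    fun n => ?_
  rw [div_eq_mul_inv, ← ENNReal.inv_pow]
  exact mul_le_mul_left (hu n) _

section Height

variable {N : ℕ} {K : Type*} [Field K] {v : AbsoluteValue K ℝ}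
  {Z : Set (Projectivization K (Fin (N + 1) → K))}

lemma le_lam {β : Fin (N + 1) → K} (hβ : β ≠ 0) (hβ1 : ∀ j : Fin N, v (β j.castSucc) = 1)
    (hβN : β (Fin.last N) ≠ 0) (hβZ : Projectivization.mk K β hβ ∈ Z) :
    ENNReal.ofReal (log (v (β (Fin.last N)))⁻¹) ≤ lam N v Z :=
  le_iSup_of_le β <| le_iSup_of_le hβ <| le_iSup_of_le hβ1 <| le_iSup_of_le hβN <|
    le_iSup_of_le hβZ le_rfl

lemma lam_le {c : ℝ≥0∞}
    (h : ∀ (β : Fin (N + 1) → K) (hβ : β ≠ 0), (∀ j : Fin N, v (β j.castSucc) = 1) →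
      β (Fin.last N) ≠ 0 → Projectivization.mk K β hβ ∈ Z →
      ENNReal.ofReal (log (v (β (Fin.last N)))⁻¹) ≤ c) :
    lam N v Z ≤ c :=
  iSup_le fun β => iSup_le fun hβ => iSup_le fun hβ1 => iSup_le fun hβN => iSup_le (h β hβ hβ1 hβN)

end Height

section HeightGrowth

variable {N d : ℕ} {K : Type*} [Field K] {v : AbsoluteValue K ℝ} (a : Coeffs N d K)

lemma lam_imSet_le [IsAlgClosed K] (hN : 1 ≤ N) (hd : d ≠ 0)
    (hna : IsNonarchimedean (v : K → ℝ)) (Z : Set (Projectivization K (Fin (N + 1) → K))) :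
    lam N v (imSet N (Fvec N d a) Z) ≤ d * max (lam N v Z) (ENNReal.ofReal (Bnorm N d v a)) := by
  refine lam_le fun γ hγ hγ1 hγN hγZ => ?_
  obtain ⟨y, hy, hyZ, rfl⟩ := exists_eq_of_mk_mem_imSet hd (Fvec_smul a) hγ hγZ
  rw [Fvec_last] at hγN ⊢
  have hyN : y (Fin.last N) ≠ 0 := fun h => hγN (by rw [h, zero_pow hd])
  rw [map_pow, ofReal_log_inv_pow]
  gcongr
  rcases normalized_or_log_inv_le_Bnorm a hN hd hna hyN hγ1 with hy1 | hB
  · exact le_max_of_le_left (le_lam hy hy1 hyN hyZ)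
  · exact le_max_of_le_right (ENNReal.ofReal_le_ofReal hB)

lemma mul_lam_le_max_lam_imSet (hd : d ≠ 0) (hna : IsNonarchimedean (v : K → ℝ))
    (Z : Set (Projectivization K (Fin (N + 1) → K))) :
    d * lam N v Z ≤
      max (lam N v (imSet N (Fvec N d a) Z)) (d * ENNReal.ofReal (Bnorm N d v a)) := by
  simp only [lam, ENNReal.mul_iSup]
  refine iSup_le fun β => iSup_le fun hβ => iSup_le fun hβ1 => iSup_le fun hβN =>
    iSup_le fun hβZ => ?_
  by_cases hB : Bnorm N d v a < log (v (β (Fin.last N)))⁻¹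
  · have hFN : Fvec N d a β (Fin.last N) ≠ 0 := by rw [Fvec_last]; exact pow_ne_zero d hβN
    have hF : Fvec N d a β ≠ 0 := fun h => hFN (congrFun h _)
    refine le_max_of_le_left ?_
    rw [← ofReal_log_inv_pow, ← map_pow, ← Fvec_last a]
    exact le_lam hF (v_Fvec_castSucc_eq_one a hd hna hβ1 hβN hB) hFN ⟨β, hβ, hF, hβZ, rfl⟩
  · exact le_max_of_le_right (by gcongr; exact not_lt.mp hB)

lemma lam_imSet_eq [IsAlgClosed K] (hN : 1 ≤ N) (hd : d ≠ 0)
    (hna : IsNonarchimedean (v : K → ℝ)) {Z : Set (Projectivization K (Fin (N + 1) → K))}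
    (h : ENNReal.ofReal (Bnorm N d v a) < lam N v Z) :
    lam N v (imSet N (Fvec N d a) Z) = d * lam N v Z := by
  refine le_antisymm ((lam_imSet_le a hN hd hna Z).trans_eq (by rw [max_eq_left h.le])) ?_
  have hdB : d * ENNReal.ofReal (Bnorm N d v a) < d * lam N v Z :=
    (ENNReal.mul_lt_mul_iff_right (Nat.cast_ne_zero.mpr hd) (ENNReal.natCast_ne_top d)).mpr h
  exact (le_max_iff.mp (mul_lam_le_max_lam_imSet a hd hna Z)).resolve_right hdB.not_ge

lemma lam_iterate_eq [IsAlgClosed K] (hN : 1 ≤ N) (hd : d ≠ 0)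
    (hna : IsNonarchimedean (v : K → ℝ)) {Z : Set (Projectivization K (Fin (N + 1) → K))}
    (h : ENNReal.ofReal (Bnorm N d v a) < lam N v Z)
    (n : ℕ) : lam N v ((imSet N (Fvec N d a))^[n] Z) = d ^ n * lam N v Z := by
  induction n generalizing Z with
  | zero => simp
  | succ n ih =>
    have hf := lam_imSet_eq a hN hd hna h
    have hlt : ENNReal.ofReal (Bnorm N d v a) < lam N v (imSet N (Fvec N d a) Z) :=
      h.trans_le (hf ▸ le_mul_of_one_le_left' (Nat.one_le_cast.mpr (Nat.one_le_iff_ne_zero.mpr hd)))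
    rw [Function.iterate_succ_apply, ih hlt, hf, pow_succ, mul_assoc]

lemma lam_iterate_le [IsAlgClosed K] (hN : 1 ≤ N) (hd : d ≠ 0)
    (hna : IsNonarchimedean (v : K → ℝ)) (Z : Set (Projectivization K (Fin (N + 1) → K)))
    (n : ℕ) : lam N v ((imSet N (Fvec N d a))^[n] Z) ≤
      d ^ n * max (lam N v Z) (ENNReal.ofReal (Bnorm N d v a)) := by
  have hd1 : (1 : ℝ≥0∞) ≤ d := Nat.one_le_cast.mpr (Nat.one_le_iff_ne_zero.mpr hd)
  induction n with
  | zero => simp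
  | succ n ih =>
    rw [Function.iterate_succ_apply']
    calc _ ≤ d * max (lam N v ((imSet N (Fvec N d a))^[n] Z)) (ENNReal.ofReal (Bnorm N d v a)) :=
          lam_imSet_le a hN hd hna _
      _ ≤ d * (d ^ n * max (lam N v Z) (ENNReal.ofReal (Bnorm N d v a))) := by
          gcongr
          exact max_le ih (le_mul_of_one_le_left' (one_le_pow₀ hd1) |>.trans' (le_max_right _ _))
      _ = _ := by rw [pow_succ', mul_assoc]

end HeightGrowth

noncomputable def green (N d : ℕ) {K : Type*} [Field K] (v : AbsoluteValue K ℝ)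
    (a : Coeffs N d K) (Z : Set (Projectivization K (Fin (N + 1) → K))) : ℝ≥0∞ :=
  limUnder atTop fun n => lam N v ((imSet N (Fvec N d a))^[n] Z) / (d : ℝ≥0∞) ^ n

section Green

variable {N d : ℕ} {K : Type*} [Field K] [IsAlgClosed K] {v : AbsoluteValue K ℝ}
  (a : Coeffs N d K)

lemma tendsto_green (hN : 1 ≤ N) (hd : 1 < d) (hna : IsNonarchimedean (v : K → ℝ))
    (Z : Set (Projectivization K (Fin (N + 1) → K))) :
    Tendsto (fun n => lam N v ((imSet N (Fvec N d a))^[n] Z) / (d : ℝ≥0∞) ^ n) atTop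
      (𝓝 (green N d v a Z)) := by
  refine tendsto_nhds_limUnder ?_
  by_cases h : ∃ n, ENNReal.ofReal (Bnorm N d v a) < lam N v ((imSet N (Fvec N d a))^[n] Z)
  · obtain ⟨n, hn⟩ := h
    refine ⟨lam N v ((imSet N (Fvec N d a))^[n] Z) / (d : ℝ≥0∞) ^ n,
      tendsto_atTop_of_eventually_const (i₀ := n) fun m hm => ?_⟩
    obtain ⟨k, rfl⟩ := Nat.exists_eq_add_of_le hm
    rw [Nat.add_comm n k, Function.iterate_add_apply, lam_iterate_eq a hN hd.ne_bot hna hn, pow_add,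
      ENNReal.mul_div_mul_left _ _ (pow_ne_zero _ (by positivity)) (ENNReal.pow_ne_top (by simp))]
  · simp only [not_exists, not_lt] at h
    exact ⟨0, ENNReal.tendsto_div_pow_of_le ENNReal.ofReal_ne_top (by exact_mod_cast hd) h⟩

lemma green_imSet (hN : 1 ≤ N) (hd : 1 < d) (hna : IsNonarchimedean (v : K → ℝ))
    (Z : Set (Projectivization K (Fin (N + 1) → K))) :
    green N d v a (imSet N (Fvec N d a) Z) = d * green N d v a Z := by
  refine tendsto_nhds_unique (tendsto_green a hN hd hna _) ?_
  refine (ENNReal.Tendsto.const_mul ((tendsto_green a hN hd hna Z).comp (tendsto_add_atTop_nat 1))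
    (.inr (ENNReal.natCast_ne_top d))).congr fun n => ?_
  rw [Function.comp_apply, Function.iterate_succ_apply, pow_succ', ← mul_div_assoc,
    ENNReal.mul_div_mul_left _ _ (by positivity) (ENNReal.natCast_ne_top d)]

lemma green_eq_lam (hN : 1 ≤ N) (hd : 1 < d) (hna : IsNonarchimedean (v : K → ℝ))
    {Z : Set (Projectivization K (Fin (N + 1) → K))}
    (h : ENNReal.ofReal (Bnorm N d v a) < lam N v Z) : green N d v a Z = lam N v Z := by
  refine tendsto_nhds_unique (tendsto_green a hN hd hna Z) (tendsto_const_nhds.congr fun n => ?_)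
  rw [lam_iterate_eq a hN hd.ne_bot hna h, mul_comm,
    ENNReal.mul_div_cancel_right (pow_ne_zero _ (by positivity)) (ENNReal.pow_ne_top (by simp))]

lemma green_le_max (hN : 1 ≤ N) (hd : 1 < d) (hna : IsNonarchimedean (v : K → ℝ))
    (Z : Set (Projectivization K (Fin (N + 1) → K))) :
    green N d v a Z ≤ max (lam N v Z) (ENNReal.ofReal (Bnorm N d v a)) :=
  le_of_tendsto' (tendsto_green a hN hd hna Z) fun n =>
    ENNReal.div_le_of_le_mul' (lam_iterate_le a hN hd.ne_bot hna Z n)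

lemma abs_toReal_green_sub_lam_le (hN : 1 ≤ N) (hd : 1 < d) (hna : IsNonarchimedean (v : K → ℝ))
    (Z : Set (Projectivization K (Fin (N + 1) → K))) :
    |(green N d v a Z).toReal - (lam N v Z).toReal| ≤ Bnorm N d v a := by
  rcases lt_or_ge (ENNReal.ofReal (Bnorm N d v a)) (lam N v Z) with h | h
  · rw [green_eq_lam a hN hd hna h, sub_self, abs_zero]
    exact Bnorm_nonneg a
  · have hG := green_le_max a hN hd hna Z
    rw [max_eq_right h] at hG
    exact abs_sub_le_of_nonneg_of_le ENNReal.toReal_nonneg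
      (ENNReal.toReal_le_of_le_ofReal (Bnorm_nonneg a) hG) ENNReal.toReal_nonneg
      (ENNReal.toReal_le_of_le_ofReal (Bnorm_nonneg a) h)

lemma green_eq_zero (hN : 1 ≤ N) (hd : 1 < d) (hna : IsNonarchimedean (v : K → ℝ))
    {Z : Set (Projectivization K (Fin (N + 1) → K))}
    (hfin : (Set.range fun n : ℕ => (imSet N (Fvec N d a))^[n] Z).Finite)
    (hne : ∀ n : ℕ, lam N v ((imSet N (Fvec N d a))^[n] Z) ≠ ⊤) : green N d v a Z = 0 := by
  obtain ⟨_, ⟨m, rfl⟩, hm⟩ := Set.exists_max_image _ (lam N v) hfin (Set.range_nonempty _)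
  exact tendsto_nhds_unique (tendsto_green a hN hd hna Z)
    (ENNReal.tendsto_div_pow_of_le (hne m) (by exact_mod_cast hd) fun n => hm _ ⟨n, rfl⟩)

end Green

theorem stmt10_general (N d : ℕ) (hN : 1 ≤ N) (hd : 2 ≤ d) (K : Type*) [Field K] [IsAlgClosed K]
    (v : AbsoluteValue K ℝ) (hna : IsNonarchimedean (v : K → ℝ))
    (a : Coeffs N d K) :
    ∃ G : Set (Projectivization K (Fin (N + 1) → K)) → ℝ≥0∞,
      ∀ Z : Set (Projectivization K (Fin (N + 1) → K)),
        Tendsto (fun n : ℕ =>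
            lam N v ((imSet N (Fvec N d a))^[n] Z) / (d : ℝ≥0∞) ^ n)
          atTop (𝓝 (G Z)) ∧
        G (imSet N (Fvec N d a) Z) = (d : ℝ≥0∞) * G Z ∧
        (ENNReal.ofReal (Bnorm N d v a) < lam N v Z → G Z = lam N v Z) ∧
        (lam N v Z ≠ ⊤ → G Z ≠ ⊤ ∧
          |(G Z).toReal - (lam N v Z).toReal| ≤ 2 * Bnorm N d v a) ∧
        (((Set.range fun n : ℕ => (imSet N (Fvec N d a))^[n] Z).Finite ∧
            ∀ n : ℕ, lam N v ((imSet N (Fvec N d a))^[n] Z) ≠ ⊤) → G Z = 0) := by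
  refine ⟨green N d v a, fun Z => ⟨tendsto_green a hN hd hna Z, green_imSet a hN hd hna Z,
    green_eq_lam a hN hd hna, fun hZ => ⟨?_, ?_⟩, fun h => green_eq_zero a hN hd hna h.1 h.2⟩⟩
  · exact ne_top_of_le_ne_top (max_ne_top hZ ENNReal.ofReal_ne_top) (green_le_max a hN hd hna Z)
  · linarith [abs_toReal_green_sub_lam_le a hN hd hna Z, Bnorm_nonneg (v := v) a]

/-- Over an algebraically closed field with a nontrivial non-archimedean
absolute value, there is a Green's function `G` on subsets of `ℙ^N(K)` such that for
every `Z`: (1) `d^{-n} λ(f_a^n(Z)) → G(Z)` in `[0,∞]`; (2) `G(f_a(Z)) = d·G(Z)`;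
(3) `λ(Z) > B(f_a) → G(Z) = λ(Z)`; (4) if `λ(Z) < ∞` then `G(Z)` is finite and
`|G(Z) − λ(Z)| ≤ 2·B(f_a)`; (5) if the iterated images of `Z` take finitely many values,
all with finite `λ`, then `G(Z) = 0`. -/
theorem stmt10 (N d : ℕ) (hN : 1 ≤ N) (hd : 2 ≤ d) (K : Type*) [Field K] [IsAlgClosed K]
    (v : AbsoluteValue K ℝ) (hna : IsNonarchimedean (v : K → ℝ))
    (hnt : ∃ x : K, x ≠ 0 ∧ v x ≠ 1)
    (a : Coeffs N d K) :
    ∃ G : Set (Projectivization K (Fin (N + 1) → K)) → ℝ≥0∞,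
      ∀ Z : Set (Projectivization K (Fin (N + 1) → K)),
        Tendsto (fun n : ℕ =>
            lam N v ((imSet N (Fvec N d a))^[n] Z) / (d : ℝ≥0∞) ^ n)
          atTop (𝓝 (G Z)) ∧
        G (imSet N (Fvec N d a) Z) = (d : ℝ≥0∞) * G Z ∧
        (ENNReal.ofReal (Bnorm N d v a) < lam N v Z → G Z = lam N v Z) ∧
        (lam N v Z ≠ ⊤ → G Z ≠ ⊤ ∧
          |(G Z).toReal - (lam N v Z).toReal| ≤ 2 * Bnorm N d v a) ∧
        (((Set.range fun n : ℕ => (imSet N (Fvec N d a))^[n] Z).Finite ∧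
            ∀ n : ℕ, lam N v ((imSet N (Fvec N d a))^[n] Z) ≠ ⊤) → G Z = 0) :=
  stmt10_general N d hN hd K v hna a
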